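/- arXiv:1501.00097 — 7 statements merged into one kernel-verified Lean document; each statement's English description precedes it below -/
import Mathlib

section
/- Let N ≥ 2, let α₁,…,α_N ∈ (0,1) with Σ αₖ = 1, and let P₁,…,P_N be points in the plane region Ω_ε = {(x₁,x₂) : x₁² ≤ x₂ ≤ x₁² + ε²} such that Σ αₖ Pₖ ∈ Ω_ε. Then there exists an index j, 1 ≤ j ≤ N, such that the point R_j = (1/(1-α_j)) Σ_{k≠j} αₖ Pₖ also lies in Ω_ε. -/
/-!
Each leave-one-out mean `R j` is a convex combination of the `P k`, so it lies on or above
the parabola `x₂ = x₁²`, whose epigraph is convex. On the other hand `∑ j (1 - a j) • R j = (N - 1) • Q`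
for the full mean `Q`, so `Q` is a convex combination of the `R j`. If every `R j` were strictly
above `x₂ = x₁² + ε²`, whose strict epigraph is convex too, then so would be `Q`, contradicting
`Q ∈ Ω_ε`.
-/

open Finset

/-- The parabolic strip Ω_ε = {(x₁,x₂) : x₁² ≤ x₂ ≤ x₁² + ε²}. -/
def OmegaSet (ε : ℝ) : Set (ℝ × ℝ) := {x | x.1 ^ 2 ≤ x.2 ∧ x.2 ≤ x.1 ^ 2 + ε ^ 2}

section Epigraph

variable {𝕜 E : Type*} [Field 𝕜] [LinearOrder 𝕜] [IsStrictOrderedRing 𝕜]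
  [AddCommGroup E] [Module 𝕜 E] {f : E → 𝕜}

theorem ConvexOn.convex_setOf_le_snd (hf : ConvexOn 𝕜 Set.univ f) :
    Convex 𝕜 {p : E × 𝕜 | f p.1 ≤ p.2} := by
  simpa using hf.convex_epigraph

theorem ConvexOn.convex_setOf_lt_snd (hf : ConvexOn 𝕜 Set.univ f) :
    Convex 𝕜 {p : E × 𝕜 | f p.1 < p.2} := by
  simpa using hf.convex_strict_epigraph

end Epigraph

section LeaveOneOut

variable {𝕜 E ι : Type*} [Field 𝕜] [AddCommGroup E] [Module 𝕜 E] [Fintype ι] [DecidableEq ι]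

def leaveOneOut (a : ι → 𝕜) (P : ι → E) (j : ι) : E :=
  (1 - a j)⁻¹ • ∑ k ∈ univ.erase j, a k • P k

variable {a : ι → 𝕜} {P : ι → E}

theorem leaveOneOut_eq_centerMass (hsum : ∑ k, a k = 1) (j : ι) :
    leaveOneOut a P j = (univ.erase j).centerMass a P := by
  rw [leaveOneOut, centerMass, sum_erase_eq_sub (f := a) (mem_univ j), hsum]

theorem sum_smul_leaveOneOut (ha : ∀ j, a j ≠ 1) (hsum : ∑ k, a k = 1) :
    ∑ j, (1 - a j) • leaveOneOut a P j = (∑ j, (1 - a j)) • ∑ k, a k • P k := by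
  simp only [leaveOneOut, smul_inv_smul₀ (sub_ne_zero.2 (ha _).symm),
    sum_erase_eq_sub (mem_univ _), sum_sub_distrib, sub_smul, hsum, one_smul]
  simp only [sum_smul, one_smul]

theorem centerMass_leaveOneOut (ha : ∀ j, a j ≠ 1) (hsum : ∑ k, a k = 1)
    (hw : ∑ j, (1 - a j) ≠ 0) :
    univ.centerMass (fun j => 1 - a j) (leaveOneOut a P) = ∑ k, a k • P k := by
  rw [centerMass, sum_smul_leaveOneOut ha hsum, inv_smul_smul₀ hw]

variable [LinearOrder 𝕜] [IsStrictOrderedRing 𝕜] {s : Set E}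

theorem Convex.leaveOneOut_mem (hs : Convex 𝕜 s) (h0 : ∀ k, 0 ≤ a k) (hsum : ∑ k, a k = 1)
    {j : ι} (hj : a j < 1) (hP : ∀ k, P k ∈ s) : leaveOneOut a P j ∈ s := by
  rw [leaveOneOut_eq_centerMass hsum]
  refine hs.centerMass_mem (fun k _ => h0 k) ?_ fun k _ => hP k
  rw [sum_erase_eq_sub (mem_univ j), hsum]
  exact sub_pos.2 hj

theorem Convex.sum_smul_mem_of_leaveOneOut_mem (hs : Convex 𝕜 s) (ha : ∀ j, a j < 1)
    (hsum : ∑ k, a k = 1) (hR : ∀ j, leaveOneOut a P j ∈ s) : ∑ k, a k • P k ∈ s := by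
  have hne : (univ : Finset ι).Nonempty := nonempty_of_sum_ne_zero (hsum ▸ one_ne_zero)
  have hw : 0 < ∑ j, (1 - a j) := sum_pos (fun j _ => sub_pos.2 (ha j)) hne
  rw [← centerMass_leaveOneOut (fun j => (ha j).ne) hsum hw.ne']
  exact hs.centerMass_mem (fun j _ => (sub_pos.2 (ha j)).le) hw fun j _ => hR j

end LeaveOneOut

theorem stmt0_general (ε : ℝ) (N : ℕ)
    (a : Fin N → ℝ) (ha : ∀ k, a k ∈ Set.Ioo (0 : ℝ) 1) (hsum : ∑ k, a k = 1)
    (P : Fin N → ℝ × ℝ) (hP : ∀ k, P k ∈ OmegaSet ε)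
    (havg : ∑ k, a k • P k ∈ OmegaSet ε) :
    ∃ j : Fin N, (1 - a j)⁻¹ • ∑ k ∈ Finset.univ.erase j, a k • P k ∈ OmegaSet ε := by
  have hsq : ConvexOn ℝ Set.univ fun x : ℝ => x ^ 2 := even_two.convexOn_pow
  have hlow (j : Fin N) : leaveOneOut a P j ∈ {x : ℝ × ℝ | x.1 ^ 2 ≤ x.2} :=
    hsq.convex_setOf_le_snd.leaveOneOut_mem (fun k => (ha k).1.le) hsum (ha j).2
      fun k => (hP k).1
  by_contra! hout
  have hup (j : Fin N) : leaveOneOut a P j ∈ {x : ℝ × ℝ | x.1 ^ 2 + ε ^ 2 < x.2} :=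
    not_le.1 fun h => hout j ⟨hlow j, h⟩
  have hQ := (hsq.add (convexOn_const _ convex_univ)).convex_setOf_lt_snd
    |>.sum_smul_mem_of_leaveOneOut_mem (fun j => (ha j).2) hsum hup
  exact hQ.not_ge havg.2

theorem stmt0 (ε : ℝ) (hε : 0 < ε) (N : ℕ) (hN : 2 ≤ N)
    (a : Fin N → ℝ) (ha : ∀ k, a k ∈ Set.Ioo (0 : ℝ) 1) (hsum : ∑ k, a k = 1)
    (P : Fin N → ℝ × ℝ) (hP : ∀ k, P k ∈ OmegaSet ε)
    (havg : ∑ k, a k • P k ∈ OmegaSet ε) :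
    ∃ j : Fin N, (1 - a j)⁻¹ • ∑ k ∈ Finset.univ.erase j, a k • P k ∈ OmegaSet ε :=
  stmt0_general ε N a ha hsum P hP havg
end

section
/- For every α ∈ (0, 1/2] and every ε with 0 < ε < (√α/(1-α))·log(1/α), one has e^{-(1-√α)ε} - α·e^{(1/√α - 1)ε} - (1-α)(1-ε) < 0. -/
/-!
Write `s = √α ∈ (0, 1)`, so that `α = s²`, and let `f(x)` be the left-hand side at `ε = x`.
Then `f(0) = 0`, and `f'(x) = (1 - s²) - (1 - s) e^{-(1-s)x} - s(1 - s) e^{(1/s-1)x}` also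
vanishes at `0`, while
`f''(x) = (1 - s)² (e^{-(1-s)x} - e^{(1/s-1)x}) < 0` for `x > 0` because `-(1 - s) < 1/s - 1`.
Hence `f'` and then `f` are strictly negative on `(0, ∞)`.
-/

open Real

lemma neg_of_hasDerivAt_neg_of_eq_zero {f f' : ℝ → ℝ} (hf : ∀ x, HasDerivAt f (f' x) x)
    (hf0 : f 0 = 0) (hf' : ∀ x, 0 < x → f' x < 0) {x : ℝ} (hx : 0 < x) : f x < 0 := by
  have hanti : StrictAntiOn f (Set.Ici 0) :=
    strictAntiOn_of_hasDerivWithinAt_neg (convex_Ici 0)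
      (fun y _ => (hf y).continuousAt.continuousWithinAt)
      (fun y _ => (hf y).hasDerivWithinAt) (by simpa using hf')
  simpa [hf0] using hanti Set.self_mem_Ici hx.le hx

lemma hasDerivAt_exp_const_mul (a x : ℝ) :
    HasDerivAt (fun y => exp (a * y)) (a * exp (a * x)) x := by
  simpa [mul_comm] using ((hasDerivAt_id x).const_mul a).exp

lemma exp_sub_sq_mul_exp_sub_lt_zero {s : ℝ} (hs0 : 0 < s) (hs1 : s < 1) {ε : ℝ} (hε : 0 < ε) :
    exp (-(1 - s) * ε) - s ^ 2 * exp ((1 / s - 1) * ε) - (1 - s ^ 2) * (1 - ε) < 0 := by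
  set f : ℝ → ℝ := fun x =>
    exp (-(1 - s) * x) - s ^ 2 * exp ((1 / s - 1) * x) - (1 - s ^ 2) * (1 - x)
  set g : ℝ → ℝ := fun x =>
    (1 - s ^ 2) - (1 - s) * exp (-(1 - s) * x) - s * (1 - s) * exp ((1 / s - 1) * x)
  have hf_deriv : ∀ x, HasDerivAt f (g x) x := fun x =>
    (((hasDerivAt_exp_const_mul (-(1 - s)) x).sub
      ((hasDerivAt_exp_const_mul (1 / s - 1) x).const_mul (s ^ 2))).sub
      (((hasDerivAt_const x 1).sub (hasDerivAt_id x)).const_mul (1 - s ^ 2))).congr_deriv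
      (by simp only [g]; field_simp; ring)
  have hg_deriv :
      ∀ x, HasDerivAt g ((1 - s) ^ 2 * (exp (-(1 - s) * x) - exp ((1 / s - 1) * x))) x :=
    fun x => (((hasDerivAt_const x (1 - s ^ 2)).sub
      ((hasDerivAt_exp_const_mul (-(1 - s)) x).const_mul (1 - s))).sub
      ((hasDerivAt_exp_const_mul (1 / s - 1) x).const_mul (s * (1 - s)))).congr_deriv
      (by field_simp; ring)
  have hg_deriv_neg : ∀ x, 0 < x →
      (1 - s) ^ 2 * (exp (-(1 - s) * x) - exp ((1 / s - 1) * x)) < 0 := by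
    intro x hx
    have hexp : -(1 - s) * x < (1 / s - 1) * x := by
      have : 1 < 1 / s := (one_lt_div hs0).mpr hs1
      gcongr
      linarith
    exact mul_neg_of_pos_of_neg (by nlinarith) (sub_neg.mpr (exp_lt_exp.mpr hexp))
  have hg_neg : ∀ x, 0 < x → g x < 0 := fun x =>
    neg_of_hasDerivAt_neg_of_eq_zero hg_deriv
      (by simp only [g, mul_zero, exp_zero]; ring) hg_deriv_neg
  exact neg_of_hasDerivAt_neg_of_eq_zero hf_deriv (by simp [f]) hg_neg hε

theorem stmt2_general (α ε : ℝ) (hα : α ∈ Set.Ioc (0 : ℝ) (1 / 2)) (hε : 0 < ε) :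
    Real.exp (-(1 - Real.sqrt α) * ε) - α * Real.exp ((1 / Real.sqrt α - 1) * ε)
      - (1 - α) * (1 - ε) < 0 := by
  obtain ⟨hα0, hα_le⟩ := hα
  have hs1 : √α < 1 := (Real.sqrt_lt' one_pos).mpr (by linarith)
  simpa [Real.sq_sqrt hα0.le] using
    exp_sub_sq_mul_exp_sub_lt_zero (Real.sqrt_pos.mpr hα0) hs1 hε

theorem stmt2 (α ε : ℝ) (hα : α ∈ Set.Ioc (0 : ℝ) (1 / 2)) (hε : 0 < ε)
    (hε' : ε < Real.sqrt α / (1 - α) * Real.log (1 / α)) :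
    Real.exp (-(1 - Real.sqrt α) * ε) - α * Real.exp ((1 / Real.sqrt α - 1) * ε)
      - (1 - α) * (1 - ε) < 0 :=
  stmt2_general α ε hα hε
end

section
/- For each α ∈ (0,1/2] and each ε ∈ (0, ε₀^α) where ε₀^α = (√α/(1-α))log(1/α), the equation ((1 - √(δ² - ε²))/(1 - δ))·e^{-δ + √(δ² - ε²)} = (1-α)/(e^{√α ε} - α e^{ε/√α}) has a unique solution δ ∈ (ε, min{1, ((1+α)/(2√α))ε}). -/
/-!
Write `α = s²` with `0 < s < 1`. For fixed `ε > 0` the left-hand side `g ε δ` has derivative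
`δ (δ - √(δ² - ε²)) e^{-δ + √(δ² - ε²)} / (1 - δ)² > 0` on `(ε, 1)`, so the solution is unique,
and existence is the intermediate value theorem. At the left end `g ε ε = e^{-ε} / (1 - ε) < K`
by second-order Taylor bounds for `exp`, which cancel exactly. At the right end either
`c ε < 1` with `c = (1 + s²) / (2s)`, where `√((cε)² - ε²) = t := ε (1 - s²) / (2s)` and
`-cε + t = -sε`, so that `K < g ε (cε)` reduces to `(1 - t) e^{2t} < 1 + t`, i.e. `tanh t < t`;
or `c ε ≥ 1` and one uses `g ε δ → ∞` as `δ → 1⁻`. That `ε < 1` follows from `x ≤ sinh x`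
at `x = log (1 / s)`.
-/

open Real Set Filter Topology

theorem Real.exp_neg_lt_quadratic {x : ℝ} (hx : 0 < x) : exp (-x) < 1 - x + x ^ 2 / 2 := by
  have hcubic : 1 + x + x ^ 2 / 2 + x ^ 3 / 6 ≤ exp x := by
    have h := sum_le_exp_of_nonneg hx.le 4
    norm_num [Finset.sum_range_succ, Nat.factorial] at h
    linarith
  -- `(1 - x + x²/2) (1 + x + x²/2 + x³/6) = 1 + x³/6 + x⁴/12 + x⁵/12`
  have hprod : 1 < (1 - x + x ^ 2 / 2) * exp x := by
    have hq : 0 < 1 - x + x ^ 2 / 2 := by nlinarith [sq_nonneg (x - 1)]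
    nlinarith [mul_le_mul_of_nonneg_left hcubic hq.le, pow_pos hx 3, pow_pos hx 4, pow_pos hx 5]
  rw [exp_neg, inv_lt_iff_one_lt_mul₀ (exp_pos x)]
  linarith

theorem Real.sinh_lt_mul_cosh {x : ℝ} (hx : 0 < x) : sinh x < x * cosh x := by
  have hmono : StrictMonoOn (fun y => y * cosh y - sinh y) (Ici 0) := by
    refine strictMonoOn_of_deriv_pos (convex_Ici 0) (by fun_prop) fun y hy => ?_
    rw [interior_Ici] at hy
    have hderiv : HasDerivAt (fun y => y * cosh y - sinh y) (y * sinh y) y := by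
      refine (((hasDerivAt_id y).mul (hasDerivAt_cosh y)).sub (hasDerivAt_sinh y)).congr_deriv ?_
      simp
    rw [hderiv.deriv]
    exact mul_pos hy (sinh_pos_iff.2 hy)
  simpa using hmono self_mem_Ici hx.le hx

theorem Real.one_sub_mul_exp_two_mul_lt {t : ℝ} (ht : 0 < t) : (1 - t) * exp (2 * t) < 1 + t := by
  have h := sinh_lt_mul_cosh ht
  rw [sinh_eq, cosh_eq] at h
  have h2t : exp (2 * t) = exp t * exp t := by rw [← exp_add]; ring_nf
  have hinv : exp (-t) * exp t = 1 := by rw [← exp_add]; simp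
  nlinarith [exp_pos t]

theorem Real.mul_log_one_div_sq_le {s : ℝ} (hs0 : 0 < s) (hs1 : s ≤ 1) :
    s * log (1 / s ^ 2) ≤ 1 - s ^ 2 := by
  have h := self_le_sinh_iff.2 (log_nonneg ((one_le_inv₀ hs0).2 hs1))
  rw [sinh_log (inv_pos.2 hs0), inv_inv] at h
  have hlog : log (1 / s ^ 2) = 2 * log s⁻¹ := by
    rw [one_div, ← inv_pow, log_pow]; push_cast; ring
  have hs : s * (s⁻¹ - s) = 1 - s ^ 2 := by field_simp
  rw [hlog]
  nlinarith

namespace DeltaEquation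

noncomputable def g (ε δ : ℝ) : ℝ :=
  (1 - √(δ ^ 2 - ε ^ 2)) / (1 - δ) * exp (-δ + √(δ ^ 2 - ε ^ 2))

/-- The right-hand side `K(α, ε)` of the equation, written in terms of `s = √α`. -/
noncomputable def K (s ε : ℝ) : ℝ :=
  (1 - s ^ 2) / (exp (s * ε) - s ^ 2 * exp (ε / s))

theorem g_self (ε : ℝ) : g ε ε = exp (-ε) / (1 - ε) := by
  simp only [g, sub_self, sqrt_zero, sub_zero, one_div, add_zero]
  ring

theorem continuousOn_g (ε : ℝ) : ContinuousOn (g ε) (Iio 1) := by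
  unfold g
  refine ContinuousOn.mul (ContinuousOn.div (by fun_prop) (by fun_prop) fun x hx => ?_)
    (by fun_prop)
  exact sub_ne_zero.2 (ne_of_gt hx)

theorem hasDerivAt_g {ε δ : ℝ} (hεδ : ε ^ 2 < δ ^ 2) (hδ : δ ≠ 1) :
    HasDerivAt (g ε)
      (δ * (δ - √(δ ^ 2 - ε ^ 2)) / (1 - δ) ^ 2 * exp (-δ + √(δ ^ 2 - ε ^ 2))) δ := by
  have hpos : 0 < δ ^ 2 - ε ^ 2 := sub_pos.2 hεδ
  have hr : √(δ ^ 2 - ε ^ 2) ≠ 0 := (sqrt_pos.2 hpos).ne'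
  have hsqrt : HasDerivAt (fun x => √(x ^ 2 - ε ^ 2)) (δ / √(δ ^ 2 - ε ^ 2)) δ := by
    convert ((hasDerivAt_pow 2 δ).sub_const (ε ^ 2)).sqrt hpos.ne' using 1
    field_simp
    ring
  have hδ' : 1 - δ ≠ 0 := sub_ne_zero.2 hδ.symm
  refine (((hsqrt.const_sub 1).div ((hasDerivAt_id δ).const_sub 1) hδ').mul
    ((hasDerivAt_neg δ).add hsqrt).exp).congr_deriv ?_
  simp only [id, Pi.add_apply, Pi.div_apply]
  field_simp
  ring

theorem strictMonoOn_g {ε : ℝ} (hε : 0 < ε) : StrictMonoOn (g ε) (Ico ε 1) := by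
  refine strictMonoOn_of_deriv_pos (convex_Ico ε 1) ((continuousOn_g ε).mono fun x hx => hx.2)
    fun δ hδ => ?_
  rw [interior_Ico] at hδ
  obtain ⟨hεδ, hδ1⟩ := hδ
  have hsq : ε ^ 2 < δ ^ 2 := by gcongr
  have hroot : √(δ ^ 2 - ε ^ 2) < δ :=
    (sqrt_lt' (hε.trans hεδ)).2 (by linarith [pow_pos hε 2])
  rw [(hasDerivAt_g hsq hδ1.ne).deriv]
  have hnum : 0 < δ * (δ - √(δ ^ 2 - ε ^ 2)) := mul_pos (hε.trans hεδ) (sub_pos.2 hroot)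
  have hden : 0 < (1 - δ) ^ 2 := pow_pos (sub_pos.2 hδ1) 2
  positivity

theorem tendsto_g_nhdsLT_one {ε : ℝ} (hε : ε ≠ 0) : Tendsto (g ε) (𝓝[<] 1) atTop := by
  have hroot : √(1 ^ 2 - ε ^ 2) < 1 := by
    rw [sqrt_lt' one_pos]
    nlinarith [pow_pos (abs_pos.2 hε) 2, sq_abs ε]
  have hinv : Tendsto (fun δ : ℝ => (1 - δ)⁻¹) (𝓝[<] 1) atTop := by
    refine tendsto_inv_nhdsGT_zero.comp (tendsto_nhdsWithin_iff.2 ⟨?_, ?_⟩)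
    · have h := ((continuous_sub_left (1 : ℝ)).tendsto 1).mono_left
        (nhdsWithin_le_nhds (s := Iio 1))
      rwa [sub_self] at h
    · filter_upwards [self_mem_nhdsWithin] with δ (hδ : δ < 1) using sub_pos.2 hδ
  have hnum : Tendsto (fun δ => (1 - √(δ ^ 2 - ε ^ 2)) * exp (-δ + √(δ ^ 2 - ε ^ 2)))
      (𝓝[<] 1) (𝓝 ((1 - √(1 ^ 2 - ε ^ 2)) * exp (-1 + √(1 ^ 2 - ε ^ 2)))) :=
    ((Continuous.tendsto (by fun_prop) 1)).mono_left nhdsWithin_le_nhds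
  refine (hnum.pos_mul_atTop (mul_pos (sub_pos.2 hroot) (exp_pos _)) hinv).congr fun δ => ?_
  simp only [g]
  ring

theorem exists_lt_g {ε : ℝ} (hε : 0 < ε) (hε1 : ε < 1) (y : ℝ) : ∃ δ ∈ Ioo ε 1, y < g ε δ := by
  obtain ⟨δ, hyδ, hδ⟩ :=
    (((tendsto_g_nhdsLT_one hε.ne').eventually_gt_atTop y).and (Ioo_mem_nhdsLT hε1)).exists
  exact ⟨δ, hδ, hyδ⟩

theorem existsUnique_g_eq {ε b y : ℝ} (hε : 0 < ε) (hb : b ≤ 1) (hlow : g ε ε < y)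
    (hhigh : ∃ δ ∈ Ioo ε 1, δ ≤ b ∧ y < g ε δ) : ∃! δ, δ ∈ Ioo ε b ∧ g ε δ = y := by
  obtain ⟨δ₂, ⟨hεδ₂, hδ₂1⟩, hδ₂b, hyδ₂⟩ := hhigh
  obtain ⟨δ, hδ, hgδ⟩ := intermediate_value_Ioo hεδ₂.le
    ((continuousOn_g ε).mono fun x hx => hx.2.trans_lt hδ₂1) ⟨hlow, hyδ₂⟩
  refine ⟨δ, ⟨⟨hδ.1, hδ.2.trans_le hδ₂b⟩, hgδ⟩, fun δ' ⟨hδ', hgδ'⟩ => ?_⟩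
  exact (strictMonoOn_g hε).injOn ⟨hδ'.1.le, hδ'.2.trans_le hb⟩ ⟨hδ.1.le, hδ.2.trans hδ₂1⟩
    (hgδ'.trans hgδ.symm)

theorem exp_sub_sq_mul_exp_pos {s ε : ℝ} (hs0 : 0 < s)
    (hε : ε * (1 - s ^ 2) < s * log (1 / s ^ 2)) : 0 < exp (s * ε) - s ^ 2 * exp (ε / s) := by
  have hlog : log (s ^ 2) + ε / s < s * ε := by
    rw [one_div, log_inv] at hε
    have h : (log (s ^ 2) + ε / s - s * ε) * s = ε * (1 - s ^ 2) + s * log (s ^ 2) := by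
      field_simp
      ring
    nlinarith
  refine sub_pos.2 ?_
  calc s ^ 2 * exp (ε / s) = exp (log (s ^ 2) + ε / s) := by rw [exp_add, exp_log (by positivity)]
    _ < exp (s * ε) := exp_lt_exp.2 hlog

theorem g_self_lt_K {s ε : ℝ} (hs0 : 0 < s) (hs1 : s < 1) (hε : 0 < ε) (hε1 : ε < 1)
    (hD : 0 < exp (s * ε) - s ^ 2 * exp (ε / s)) : g ε ε < K s ε := by
  set u := ε * (1 - s) with hu
  set v := ε * (1 - s) / s with hv
  have hexp : exp (-ε) * (exp (s * ε) - s ^ 2 * exp (ε / s)) = exp (-u) - s ^ 2 * exp v := by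
    rw [mul_sub, ← exp_add, mul_left_comm, ← exp_add]
    congr 3
    · ring
    · rw [hv]
      field_simp
      ring
  have hu' := exp_neg_lt_quadratic (mul_pos hε (sub_pos.2 hs1))
  have hv' := mul_le_mul_of_nonneg_left
    (quadratic_le_exp_of_nonneg (x := v) (by have := sub_pos.2 hs1; positivity)) (sq_nonneg s)
  have hpoly : 1 - u + u ^ 2 / 2 - s ^ 2 * (1 + v + v ^ 2 / 2) = (1 - s ^ 2) * (1 - ε) := by
    rw [hu, hv]
    field_simp
    ring
  rw [g_self, K, div_lt_div_iff₀ (sub_pos.2 hε1) hD, hexp]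
  linarith

theorem K_lt_g_mul {s ε : ℝ} (hs0 : 0 < s) (hs1 : s < 1) (hε : 0 < ε)
    (hD : 0 < exp (s * ε) - s ^ 2 * exp (ε / s)) (hc : (1 + s ^ 2) / (2 * s) * ε < 1) :
    K s ε < g ε ((1 + s ^ 2) / (2 * s) * ε) := by
  set c := (1 + s ^ 2) / (2 * s) with hc_def
  set t := ε * (1 - s ^ 2) / (2 * s) with ht
  have ht0 : 0 < t := by
    have : 0 < 1 - s ^ 2 := by nlinarith
    positivity
  have hroot : √((c * ε) ^ 2 - ε ^ 2) = t := by
    rw [show (c * ε) ^ 2 - ε ^ 2 = t ^ 2 by rw [hc_def, ht]; field_simp; ring]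
    exact sqrt_sq ht0.le
  have hg : g ε (c * ε) = (1 - t) * exp (-(s * ε)) / (1 - c * ε) := by
    rw [g, hroot, div_mul_eq_mul_div]
    congr 3
    rw [hc_def, ht]
    field_simp
    ring
  have hexp : exp (-(s * ε)) * (exp (s * ε) - s ^ 2 * exp (ε / s)) = 1 - s ^ 2 * exp (2 * t) := by
    rw [mul_sub, ← exp_add, mul_left_comm, ← exp_add, neg_add_cancel, exp_zero]
    congr 3
    rw [ht]
    field_simp
    ring
  have hlin : (1 - s ^ 2) * (1 - c * ε) = 1 - s ^ 2 - t - t * s ^ 2 := by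
    rw [hc_def, ht]
    field_simp
    ring
  have key := mul_lt_mul_of_pos_left (one_sub_mul_exp_two_mul_lt ht0) (pow_pos hs0 2)
  rw [hg, K, div_lt_div_iff₀ hD (sub_pos.2 hc), mul_assoc, hexp, hlin]
  nlinarith

end DeltaEquation

open DeltaEquation

theorem stmt4 (α ε : ℝ) (hα : α ∈ Set.Ioc (0 : ℝ) (1 / 2)) (hε : 0 < ε)
    (hε' : ε < Real.sqrt α / (1 - α) * Real.log (1 / α)) :
    ∃! δ : ℝ, δ ∈ Set.Ioo ε (min 1 ((1 + α) / (2 * Real.sqrt α) * ε)) ∧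
      (1 - Real.sqrt (δ ^ 2 - ε ^ 2)) / (1 - δ) *
          Real.exp (-δ + Real.sqrt (δ ^ 2 - ε ^ 2)) =
        (1 - α) / (Real.exp (Real.sqrt α * ε) - α * Real.exp (ε / Real.sqrt α)) := by
  obtain ⟨hα0, hα2⟩ := hα
  obtain ⟨s, hs0, rfl⟩ : ∃ s, 0 < s ∧ α = s ^ 2 :=
    ⟨√α, sqrt_pos.2 hα0, (sq_sqrt hα0.le).symm⟩
  rw [sqrt_sq hs0.le] at hε' ⊢
  have hs1 : s < 1 := by nlinarith
  have hε_mul : ε * (1 - s ^ 2) < s * log (1 / s ^ 2) := by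
    rwa [div_mul_eq_mul_div, lt_div_iff₀ (by nlinarith)] at hε'
  have hε1 : ε < 1 := by nlinarith [mul_log_one_div_sq_le hs0 hs1.le]
  have hD := exp_sub_sq_mul_exp_pos hs0 hε_mul
  have hc : 1 < (1 + s ^ 2) / (2 * s) := by
    rw [one_lt_div (by positivity)]
    nlinarith [sq_pos_of_pos (sub_pos.2 hs1)]
  refine existsUnique_g_eq hε (min_le_left _ _) (g_self_lt_K hs0 hs1 hε hε1 hD) ?_
  rcases lt_or_ge ((1 + s ^ 2) / (2 * s) * ε) 1 with hcε | hcε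
  · exact ⟨_, ⟨lt_mul_of_one_lt_left hε hc, hcε⟩, le_min hcε.le le_rfl,
      K_lt_g_mul hs0 hs1 hε hD hcε⟩
  · obtain ⟨δ, hδ, hKδ⟩ := exists_lt_g hε hε1 (K s ε)
    exact ⟨δ, hδ, le_min hδ.2.le (hδ.2.le.trans hcε), hKδ⟩
end

section
/- Fix n ≥ 1 and let Q_k = (0,2^{-k})^n. With φ*(t) = 2^{-n/2}(k(2^n − 1) − 1) for t ∈ Q_k \ Q_{k+1}, the average of φ*² over Q_k equals 1 + 2^{-n}(2^n − 1)² k² for every k ≥ 0. Consequently ⟨φ*²⟩_{Q_k} − ⟨φ*⟩_{Q_k}² = 1 for all k. -/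
/-!
The cube `Q_k` is the disjoint union of the shells `Q_j \ Q_{j+1}`, `j ≥ k`, of volume
`r^j (1 - r)` with `r = 2^{-n}`, and `φ` is constant on each shell. If a function takes on the
`j`-th shell a value `c_j` with `c_j (1 - r) = P(j) - r P(j + 1)` for a polynomial `P`, the series
for its integral over `Q_k` telescopes to `r^k P(k)`, so its average over `Q_k` is `P(k)`.
For `φ²` this works with `P(x) = 1 + 2^{-n} (2^n - 1)² x²`, for `φ` with
`P(x) = 2^{-n/2} (2^n - 1) x`, and `2^{-n} = (2^{-n/2})²` makes the variance equal to `1`.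
-/

open MeasureTheory

/-- The cube Q_k = (0, 2^{-k})^n. -/
def dCube (n k : ℕ) : Set (Fin n → ℝ) :=
  Set.univ.pi fun _ : Fin n => Set.Ioo (0 : ℝ) ((2 : ℝ)⁻¹ ^ k)

open Filter Topology Polynomial Set

theorem eq_of_hasSum_sub_add_one_of_tendsto_zero {G : Type*} [AddCommGroup G] [TopologicalSpace G]
    [IsTopologicalAddGroup G] [T2Space G] {T : ℕ → G} {a : G}
    (h : HasSum (fun j => T j - T (j + 1)) a) (hT : Tendsto T atTop (𝓝 0)) : a = T 0 :=
  tendsto_nhds_unique h.tendsto_sum_nat <| by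
    simpa only [Finset.sum_range_sub', sub_zero] using (tendsto_const_nhds (x := T 0)).sub hT

theorem Polynomial.summable_eval_mul_pow (p : ℝ[X]) {r : ℝ} (hr : |r| < 1) :
    Summable fun j : ℕ => p.eval (j : ℝ) * r ^ j := by
  induction p using Polynomial.induction_on' with
  | add p q hp hq => simpa [add_mul] using hp.add hq
  | monomial m a =>
    simpa [mul_assoc] using
      (summable_pow_mul_geometric_of_norm_lt_one m (Real.norm_eq_abs r ▸ hr)).mul_left a

theorem Antitone.iUnion_diff_add_one_eq {α : Type*} {s : ℕ → Set α} (hs : Antitone s)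
    (h : ⋂ i, s i = ∅) : ⋃ j, (s j \ s (j + 1)) = s 0 := by
  refine subset_antisymm (iUnion_subset fun j => sdiff_subset.trans (hs (Nat.zero_le j)))
    fun t ht => ?_
  obtain ⟨m, hm⟩ := iInter_eq_empty_iff.1 h t
  induction m with
  | zero => exact absurd ht hm
  | succ m ih =>
    by_cases htm : t ∈ s m
    · exact mem_iUnion.2 ⟨m, htm, hm⟩
    · exact ih htm

theorem Antitone.pairwise_disjoint_diff_add_one {α : Type*} {s : ℕ → Set α}
    (hs : Antitone s) : Pairwise (Function.onFun Disjoint fun j => s j \ s (j + 1)) :=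
  (pairwise_disjoint_on _).2 fun _ _ hij =>
    disjoint_left.2 fun _ hi hj => hi.2 (hs hij hj.1)

theorem hasSum_setIntegral_iUnion_of_eqOn_const {X ι : Type*} [MeasurableSpace X] [Countable ι]
    {μ : Measure X} {s : ι → Set X} (hs : ∀ i, MeasurableSet (s i))
    (hd : Pairwise (Function.onFun Disjoint s)) (hμ : ∀ i, μ (s i) ≠ ⊤)
    {f : X → ℝ} {c : ι → ℝ}
    (hf : ∀ i, ∀ x ∈ s i, f x = c i) (hc : Summable fun i => c i * μ.real (s i)) :
    HasSum (fun i => c i * μ.real (s i)) (∫ x in ⋃ i, s i, f x ∂μ) := by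
  have hint : ∀ i, ∫ x in s i, f x ∂μ = c i * μ.real (s i) := fun i => by
    rw [setIntegral_congr_fun (hs i) (hf i), setIntegral_const, smul_eq_mul, mul_comm]
  have hnorm : ∀ i, ∫ x in s i, ‖f x‖ ∂μ = |c i * μ.real (s i)| := fun i => by
    rw [setIntegral_congr_fun (hs i) fun x hx => congrArg norm (hf i x hx), setIntegral_const,
      smul_eq_mul, Real.norm_eq_abs, abs_mul, abs_of_nonneg measureReal_nonneg, mul_comm]
  have hfi : ∀ i, IntegrableOn f (s i) μ := fun i =>
    (integrableOn_const (hμ i)).congr_fun (fun x hx => (hf i x hx).symm) (hs i)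
  simpa only [hint] using hasSum_integral_iUnion hs hd
    (integrableOn_iUnion_of_summable_integral_norm hfi (by simpa only [hnorm] using hc.abs))

theorem measurableSet_dCube (n k : ℕ) : MeasurableSet (dCube n k) :=
  MeasurableSet.univ_pi fun _ => measurableSet_Ioo

theorem antitone_dCube (n : ℕ) : Antitone (dCube n) := fun _ _ hkj =>
  pi_mono fun _ _ => Ioo_subset_Ioo_right (pow_le_pow_of_le_one (by norm_num) (by norm_num) hkj)

theorem volume_dCube_lt_top (n k : ℕ) : volume (dCube n k) < ⊤ := by
  simp only [dCube, volume_pi_pi, Real.volume_Ioo, sub_zero, Finset.prod_const]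
  exact ENNReal.pow_lt_top ENNReal.ofReal_lt_top

theorem iInter_dCube (n : ℕ) (hn : 1 ≤ n) : ⋂ k, dCube n k = ∅ := by
  refine iInter_eq_empty_iff.2 fun t => ?_
  let i : Fin n := ⟨0, hn⟩
  by_cases ht : t ∈ dCube n 0
  · obtain ⟨k, hk⟩ :=
      exists_pow_lt_of_lt_one (ht i trivial).1 (by norm_num : (2 : ℝ)⁻¹ < 1)
    exact ⟨k, fun htk => (htk i trivial).2.not_gt hk⟩
  · exact ⟨0, ht⟩

theorem measureReal_dCube (n k : ℕ) : volume.real (dCube n k) = ((2 : ℝ) ^ n)⁻¹ ^ k := by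
  simp [dCube, measureReal_def, volume_pi_pi, Real.volume_Ioo, ← pow_mul, mul_comm]

theorem measureReal_dCube_diff (n j : ℕ) :
    volume.real (dCube n j \ dCube n (j + 1)) =
      ((2 : ℝ) ^ n)⁻¹ ^ j * (1 - ((2 : ℝ) ^ n)⁻¹) := by
  rw [measureReal_sdiff (antitone_dCube n j.le_succ) (measurableSet_dCube n _)
    (volume_dCube_lt_top n j).ne, measureReal_dCube, measureReal_dCube, pow_succ]
  ring

theorem setAverage_dCube_eq_eval {n : ℕ} (hn : 1 ≤ n) {f : (Fin n → ℝ) → ℝ}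
    (c P : ℝ[X])
    (hf : ∀ j : ℕ, ∀ t ∈ dCube n j \ dCube n (j + 1), f t = c.eval (j : ℝ))
    (hP : ∀ x : ℝ,
      c.eval x * (1 - ((2 : ℝ) ^ n)⁻¹) = P.eval x - ((2 : ℝ) ^ n)⁻¹ * P.eval (x + 1))
    (k : ℕ) : ⨍ t in dCube n k, f t = P.eval (k : ℝ) := by
  set r : ℝ := ((2 : ℝ) ^ n)⁻¹
  have hr : |r| < 1 := by
    rw [abs_of_pos (by positivity)]
    exact inv_lt_one_of_one_lt₀ (one_lt_pow₀ one_lt_two (by omega))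
  set T : ℕ → ℝ := fun j => r ^ j * P.eval (j : ℝ)
  have hterm : ∀ j : ℕ,
      c.eval (j : ℝ) * volume.real (dCube n j \ dCube n (j + 1)) = T j - T (j + 1) := by
    intro j
    rw [measureReal_dCube_diff]
    simp only [T, pow_succ, Nat.cast_succ]
    linear_combination r ^ j * hP j
  have hsum :
      Summable fun j : ℕ => c.eval (j : ℝ) * volume.real (dCube n j \ dCube n (j + 1)) := by
    simpa only [measureReal_dCube_diff, mul_assoc] using
      (c.summable_eval_mul_pow hr).mul_right (1 - r)
  have hT : Tendsto T atTop (𝓝 0) := by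
    simpa only [T, mul_comm] using (P.summable_eval_mul_pow hr).tendsto_atTop_zero
  have hshift : Antitone fun j => dCube n (k + j) :=
    (antitone_dCube n).comp_monotone fun _ _ h => Nat.add_le_add_left h k
  have hint := hasSum_setIntegral_iUnion_of_eqOn_const
    (fun j => (measurableSet_dCube n _).diff (measurableSet_dCube n _))
    hshift.pairwise_disjoint_diff_add_one
    (fun j => ((measure_mono sdiff_subset).trans_lt (volume_dCube_lt_top n _)).ne)
    (fun j => hf (k + j))
    (hsum.comp_injective (add_right_injective k))
  have hempty : ⋂ j, dCube n (k + j) = ∅ := by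
    simpa only [add_comm k] using ((antitone_dCube n).iInter_nat_add k).trans (iInter_dCube n hn)
  rw [hshift.iUnion_diff_add_one_eq hempty, Nat.add_zero] at hint
  have hTk : ∫ t in dCube n k, f t = T k :=
    eq_of_hasSum_sub_add_one_of_tendsto_zero (T := fun j => T (k + j))
      (by simpa only [← add_assoc, hterm] using hint)
      (hT.comp (tendsto_atTop_mono (Nat.le_add_left · k) tendsto_id))
  rw [setAverage_eq, measureReal_dCube, hTk, smul_eq_mul, inv_mul_cancel_left₀ (by positivity)]

theorem Real.rpow_neg_div_two_sq {x : ℝ} (hx : 0 ≤ x) (n : ℕ) :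
    (x ^ (-(n : ℝ) / 2)) ^ 2 = (x ^ n)⁻¹ := by
  rw [← Real.rpow_mul_natCast hx, Nat.cast_two, div_mul_cancel₀ _ two_ne_zero, Real.rpow_neg hx,
    Real.rpow_natCast]

theorem stmt8 (n : ℕ) (hn : 1 ≤ n) (φ : (Fin n → ℝ) → ℝ)
    (hφ : ∀ k : ℕ, ∀ t ∈ dCube n k \ dCube n (k + 1),
      φ t = (2 : ℝ) ^ (-(n : ℝ) / 2) * ((k : ℝ) * ((2 : ℝ) ^ n - 1) - 1)) :
    ∀ k : ℕ,
      (⨍ t in dCube n k, (φ t) ^ 2) =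
        1 + ((2 : ℝ) ^ n)⁻¹ * ((2 : ℝ) ^ n - 1) ^ 2 * (k : ℝ) ^ 2 ∧
      (⨍ t in dCube n k, (φ t) ^ 2) - (⨍ t in dCube n k, φ t) ^ 2 = 1 := by
  intro k
  set q : ℝ := 2 ^ n
  set s : ℝ := 2 ^ (-(n : ℝ) / 2)
  have hs : s ^ 2 = q⁻¹ := Real.rpow_neg_div_two_sq zero_le_two n
  have hq : q ≠ 0 := by positivity
  have hsq : ⨍ t in dCube n k, φ t ^ 2 = 1 + q⁻¹ * (q - 1) ^ 2 * k ^ 2 :=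
    (setAverage_dCube_eq_eval hn (f := fun t => φ t ^ 2)
      (C q⁻¹ * (X * C (q - 1) - 1) ^ 2) (1 + C (q⁻¹ * (q - 1) ^ 2) * X ^ 2)
      (fun j t ht => by simp [hφ j t ht, mul_pow, hs])
      (fun x => by
        simp only [map_sub, map_one, map_mul, map_pow, eval_add, eval_sub, eval_mul, eval_pow,
          eval_C, eval_X, eval_one]
        field_simp
        ring) k).trans (by simp)
  have hmean : ⨍ t in dCube n k, φ t = s * (q - 1) * k :=
    (setAverage_dCube_eq_eval hn (f := φ) (C s * (X * C (q - 1) - 1)) (C (s * (q - 1)) * X)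
      (fun j t ht => by simp [hφ j t ht])
      (fun x => by
        simp only [map_sub, map_one, map_mul, eval_sub, eval_mul, eval_C, eval_X, eval_one]
        field_simp
        ring) k).trans (by simp)
  refine ⟨hsq, ?_⟩
  rw [hsq, hmean, mul_pow, mul_pow, hs]
  ring
end

section
/- Let T be an α-tree on a measure space (X,μ) with 0 < μ(X) < ∞ and α ∈ (0,1/2], and let B be an α-concave function on Ω_ε. If φ is a T-simple function with ‖φ‖_{BMO(T)} ≤ ε, then B(⟨φ⟩_{X,μ}, ⟨φ²⟩_{X,μ}) ≥ (1/μ(X)) ∫_X B(φ,φ²) dμ. -/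
open MeasureTheory

/-- An α-tree on a measure space `(X, μ)`: the whole space `X` (as `Set.univ`) is the
root; each element is the union of finitely many pairwise a.e.-disjoint measurable
children, each of measure at least `α` times the measure of the parent; and the tree
differentiates `L¹(X, μ)`. -/
structure AlphaTree {X : Type*} [MeasurableSpace X] (μ : Measure X) (α : ℝ) where
  gens : ℕ → Set (Set X)
  children : Set X → Set (Set X)
  gens_zero : gens 0 = {Set.univ}
  gens_succ : ∀ m, gens (m + 1) = ⋃ J ∈ gens m, children J
  measurableSet_mem : ∀ m, ∀ J ∈ gens m, MeasurableSet J
  children_finite : ∀ m, ∀ J ∈ gens m, (children J).Finite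
  children_cover : ∀ m, ∀ J ∈ gens m, ⋃₀ children J = J
  children_ae_disjoint : ∀ m, ∀ J ∈ gens m, ∀ I ∈ children J, ∀ I' ∈ children J,
    I ≠ I' → μ (I ∩ I') = 0
  children_not_small : ∀ m, ∀ J ∈ gens m, ∀ I ∈ children J,
    α * (μ J).toReal ≤ (μ I).toReal
  differentiates : ∀ f : X → ℝ, Integrable f μ →
    ∀ J : ℕ → Set X, (∀ m, J m ∈ gens m) →
      ∀ᵐ x ∂μ, (∀ m, x ∈ J m) →
        Filter.Tendsto (fun m => ⨍ y in J m, f y ∂μ) Filter.atTop (nhds (f x))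

/-- All elements of an α-tree. -/
def AlphaTree.tree {X : Type*} [MeasurableSpace X] {μ : Measure X} {α : ℝ}
    (T : AlphaTree μ α) : Set (Set X) := ⋃ m, T.gens m

/-!
Backward induction along the tree, starting from the generation on which `φ` is constant.
For `J` in the tree, the Bellman point `x^J = (⟨φ⟩_J, ⟨φ²⟩_J)` lies in `Ω_ε` (Jensen's
inequality below, the BMO bound above), and it is the convex combination of the points `x^I`
of the children of `J` with weights `μ(I)/μ(J) ≥ α`. So it suffices to extend α-concavity to
such finite combinations: split off the point `x^j` maximizing
`(x^j₂ - (x^j₁)²) + (x^j₁ - x^J₁)²`; the barycenter of the remaining points then stays in `Ω_ε`,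
and one two-point step plus induction on the number of points give
`B(x^J) ≥ Σ (μ(I)/μ(J)) B(x^I)`.
-/

open Function

def IsAlphaConcaveOn {E : Type*} [AddCommGroup E] [Module ℝ E] (α : ℝ) (Ω : Set E)
    (B : E → ℝ) : Prop :=
  ∀ β ∈ Set.Icc α (1 / 2 : ℝ), ∀ x y : E, x ∈ Ω → y ∈ Ω → β • x + (1 - β) • y ∈ Ω →
    β * B x + (1 - β) * B y ≤ B (β • x + (1 - β) • y)

theorem IsAlphaConcaveOn.le_add_smul {E : Type*} [AddCommGroup E] [Module ℝ E] {α : ℝ}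
    {Ω : Set E} {B : E → ℝ} (hB : IsAlphaConcaveOn α Ω B) {a b : ℝ} (ha : α ≤ a) (hb : α ≤ b)
    (hab : a + b = 1) {x y : E} (hx : x ∈ Ω) (hy : y ∈ Ω) (hxy : a • x + b • y ∈ Ω) :
    a * B x + b * B y ≤ B (a • x + b • y) := by
  rcases le_total a (1 / 2) with ha' | ha'
  · obtain rfl : b = 1 - a := by linarith
    exact hB a ⟨ha, ha'⟩ x y hx hy hxy
  · obtain rfl : a = 1 - b := by linarith
    have h := hB b ⟨hb, by linarith⟩ y x hy hx (by rwa [add_comm])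
    rwa [add_comm (b * _), add_comm (b • _)] at h

def parabolaExcess (p : ℝ × ℝ) : ℝ := p.2 - p.1 ^ 2

theorem mem_omegaSet_iff {ε : ℝ} {p : ℝ × ℝ} :
    p ∈ OmegaSet ε ↔ 0 ≤ parabolaExcess p ∧ parabolaExcess p ≤ ε ^ 2 := by
  exact and_congr sub_nonneg.symm sub_le_iff_le_add'.symm

theorem convex_parabolaExcess_nonneg : Convex ℝ {p : ℝ × ℝ | 0 ≤ parabolaExcess p} := by
  simpa [parabolaExcess] using ((even_two.convexOn_pow (𝕜 := ℝ)).convex_epigraph)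

theorem parabolaExcess_add_smul {a b : ℝ} (hab : a + b = 1) (x y : ℝ × ℝ) :
    parabolaExcess (a • x + b • y) =
      a * parabolaExcess x + b * parabolaExcess y + a * b * (x.1 - y.1) ^ 2 := by
  obtain rfl : b = 1 - a := by linarith
  simp only [parabolaExcess, Prod.fst_add, Prod.snd_add, Prod.smul_fst, Prod.smul_snd,
    smul_eq_mul]
  ring

theorem exists_parabolaExcess_sum_smul_le {ι : Type*} {s : Finset ι} (hs : s.Nonempty)
    {w : ι → ℝ} (hw₀ : ∀ i ∈ s, 0 ≤ w i) (hw₁ : ∑ i ∈ s, w i = 1) (p : ι → ℝ × ℝ) :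
    ∃ j ∈ s, parabolaExcess (∑ i ∈ s, w i • p i) ≤
      parabolaExcess (p j) + ((p j).1 - (∑ i ∈ s, w i • p i).1) ^ 2 := by
  set X := ∑ i ∈ s, w i • p i
  set g : ι → ℝ := fun i => parabolaExcess (p i) + ((p i).1 - X.1) ^ 2
  obtain ⟨j, hj, hmax⟩ := s.exists_max_image g hs
  refine ⟨j, hj, ?_⟩
  have hmean : ∑ i ∈ s, w i * g i = parabolaExcess X := by
    have h₁ : X.1 = ∑ i ∈ s, w i * (p i).1 := by simp [X, Prod.fst_sum]
    have h₂ : X.2 = ∑ i ∈ s, w i * (p i).2 := by simp [X, Prod.snd_sum]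
    simp only [g, parabolaExcess]
    have : ∀ i ∈ s, w i * ((p i).2 - (p i).1 ^ 2 + ((p i).1 - X.1) ^ 2) =
        w i * (p i).2 - 2 * X.1 * (w i * (p i).1) + X.1 ^ 2 * w i := fun i _ => by ring
    rw [Finset.sum_congr rfl this, Finset.sum_add_distrib, Finset.sum_sub_distrib,
      ← Finset.mul_sum, ← Finset.mul_sum, hw₁, ← h₁, ← h₂]
    ring
  calc parabolaExcess X = ∑ i ∈ s, w i * g i := hmean.symm
    _ ≤ ∑ i ∈ s, w i * g j := Finset.sum_le_sum fun i hi =>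
        mul_le_mul_of_nonneg_left (hmax i hi) (hw₀ i hi)
    _ = g j := by rw [← Finset.sum_mul, hw₁, one_mul]

theorem parabolaExcess_le_of_le_add_sq {a b : ℝ} (ha : 0 ≤ a) (hb : 0 < b) (hab : a + b = 1)
    {x y : ℝ × ℝ}
    (h : parabolaExcess (a • x + b • y) ≤ parabolaExcess x + (x.1 - (a • x + b • y).1) ^ 2) :
    parabolaExcess y ≤ parabolaExcess (a • x + b • y) := by
  have hfst : x.1 - (a • x + b • y).1 = b * (x.1 - y.1) := by
    obtain rfl : a = 1 - b := by linarith
    simp only [Prod.fst_add, Prod.smul_fst, smul_eq_mul]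
    ring
  rw [hfst, parabolaExcess_add_smul hab] at h
  rw [parabolaExcess_add_smul hab]
  obtain rfl : a = 1 - b := by linarith
  nlinarith [mul_nonneg (mul_nonneg ha ha) (mul_nonneg hb.le (sq_nonneg (x.1 - y.1)))]

theorem Finset.sum_smul_eq_smul_add_smul_sum_erase {ι M : Type*} [DecidableEq ι]
    [AddCommGroup M] [Module ℝ M] {s : Finset ι} {j : ι} (hj : j ∈ s) (w : ι → ℝ) (p : ι → M)
    {t : ℝ} (ht : t ≠ 0) :
    ∑ i ∈ s, w i • p i = w j • p j + t • ∑ i ∈ s.erase j, (w i / t) • p i := by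
  rw [← Finset.add_sum_erase s _ hj, Finset.smul_sum]
  congr 1
  exact Finset.sum_congr rfl fun i _ => by rw [smul_smul, mul_div_cancel₀ _ ht]

theorem IsAlphaConcaveOn.le_map_sum {ι : Type*} {α ε : ℝ} {B : ℝ × ℝ → ℝ}
    (hB : IsAlphaConcaveOn α (OmegaSet ε) B) (hα : 0 < α) (s : Finset ι) {w : ι → ℝ}
    {p : ι → ℝ × ℝ} (hw : ∀ i ∈ s, α ≤ w i) (hw₁ : ∑ i ∈ s, w i = 1)
    (hp : ∀ i ∈ s, p i ∈ OmegaSet ε) (hX : ∑ i ∈ s, w i • p i ∈ OmegaSet ε) :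
    ∑ i ∈ s, w i * B (p i) ≤ B (∑ i ∈ s, w i • p i) := by
  classical
  induction s using Finset.strongInduction generalizing w with
  | H s ih =>
  have hs : s.Nonempty := Finset.nonempty_of_sum_ne_zero (by rw [hw₁]; exact one_ne_zero)
  have hw₀ : ∀ i ∈ s, 0 ≤ w i := fun i hi => hα.le.trans (hw i hi)
  obtain ⟨j, hj, hjX⟩ := exists_parabolaExcess_sum_smul_le hs hw₀ hw₁ p
  rcases (s.erase j).eq_empty_or_nonempty with hrest | ⟨k, hk⟩
  · obtain rfl : s = {j} := by
      rw [← Finset.insert_erase hj, hrest]; rfl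
    simp_all
  set t := ∑ i ∈ s.erase j, w i
  have hαt : α ≤ t := (hw k (Finset.mem_of_mem_erase hk)).trans
    (Finset.single_le_sum (fun i hi => hw₀ i (Finset.mem_of_mem_erase hi)) hk)
  have ht : 0 < t := hα.trans_le hαt
  have hjt : w j + t = 1 := by rw [add_comm, Finset.sum_erase_add s w hj, hw₁]
  set Y := ∑ i ∈ s.erase j, (w i / t) • p i
  have hXY : ∑ i ∈ s, w i • p i = w j • p j + t • Y :=
    Finset.sum_smul_eq_smul_add_smul_sum_erase hj w p ht.ne'
  have hv : ∀ i ∈ s.erase j, α ≤ w i / t := fun i hi =>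
    (le_div_iff₀ ht).2 ((mul_le_of_le_one_right hα.le (by linarith [hw₀ j hj])).trans
      (hw i (Finset.mem_of_mem_erase hi)))
  have hv₁ : ∑ i ∈ s.erase j, w i / t = 1 := by rw [← Finset.sum_div, div_self ht.ne']
  -- by the choice of `j`, removing `p j` does not increase the excess of the barycenter
  have hY : Y ∈ OmegaSet ε := by
    rw [hXY, mem_omegaSet_iff] at hX
    rw [hXY] at hjX
    refine mem_omegaSet_iff.2 ⟨convex_parabolaExcess_nonneg.sum_mem
      (fun i hi => (hα.trans_le (hv i hi)).le) hv₁
      (fun i hi => (mem_omegaSet_iff.1 (hp i (Finset.mem_of_mem_erase hi))).1), ?_⟩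
    exact (parabolaExcess_le_of_le_add_sq (hw₀ j hj) ht hjt hjX).trans hX.2
  have hIH : ∑ i ∈ s.erase j, w i / t * B (p i) ≤ B Y :=
    ih _ (Finset.erase_ssubset hj) hv hv₁ (fun i hi => hp i (Finset.mem_of_mem_erase hi)) hY
  calc ∑ i ∈ s, w i * B (p i)
      = w j * B (p j) + t * ∑ i ∈ s.erase j, w i / t * B (p i) := by
        simpa only [smul_eq_mul] using
          Finset.sum_smul_eq_smul_add_smul_sum_erase hj w (fun i => B (p i)) ht.ne'
    _ ≤ w j * B (p j) + t * B Y := by gcongr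
    _ ≤ B (w j • p j + t • Y) := hB.le_add_smul (hw j hj) hαt hjt (hp j hj) hY (hXY ▸ hX)
    _ = B (∑ i ∈ s, w i • p i) := by rw [hXY]

namespace MeasureTheory

open scoped ENNReal

variable {X E : Type*} [MeasurableSpace X] {μ : Measure X}
  [NormedAddCommGroup E] [NormedSpace ℝ E]

theorem integral_biUnion_finset₀ {ι : Type*} (t : Finset ι) {s : ι → Set X} {f : X → E}
    (hs : ∀ i ∈ t, NullMeasurableSet (s i) μ) (h's : Set.Pairwise (↑t) (AEDisjoint μ on s))
    (hf : ∀ i ∈ t, IntegrableOn f (s i) μ) :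
    ∫ x in ⋃ i ∈ t, s i, f x ∂μ = ∑ i ∈ t, ∫ x in s i, f x ∂μ := by
  classical
  induction t using Finset.induction_on with
  | empty => simp
  | insert a t hat IH =>
    simp only [Finset.coe_insert, Finset.forall_mem_insert, Set.pairwise_insert,
      Finset.set_biUnion_insert] at hs hf h's ⊢
    rw [setIntegral_union₀ _ (Finset.nullMeasurableSet_biUnion t hs.2) hf.1
      (integrableOn_finset_iUnion.2 hf.2), Finset.sum_insert hat, IH hs.2 h's.1 hf.2]
    rw [AEDisjoint, Set.inter_iUnion₂]
    exact (measure_biUnion_null_iff t.countable_toSet).2 fun i hi =>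
      (h's.2 i hi (ne_of_mem_of_not_mem hi hat).symm).1

theorem setAverage_biUnion_finset₀ [IsFiniteMeasure μ] {ι : Type*} (t : Finset ι)
    {s : ι → Set X} {f : X → E} (hs : ∀ i ∈ t, NullMeasurableSet (s i) μ)
    (h's : Set.Pairwise (↑t) (AEDisjoint μ on s)) (hf : ∀ i ∈ t, IntegrableOn f (s i) μ) :
    ⨍ x in ⋃ i ∈ t, s i, f x ∂μ =
      ∑ i ∈ t, (μ.real (s i) / μ.real (⋃ i ∈ t, s i)) • ⨍ x in s i, f x ∂μ := by
  rw [setAverage_eq, integral_biUnion_finset₀ t hs h's hf, Finset.smul_sum]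
  refine Finset.sum_congr rfl fun i _ => ?_
  rw [setAverage_eq, smul_smul]
  by_cases h : μ.real (s i) = 0
  · rw [Measure.restrict_eq_zero.2 ((measureReal_eq_zero_iff).1 h)]
    simp
  · rw [div_mul_eq_mul_div, mul_inv_cancel₀ h, one_div]

theorem sum_measureReal_div_measureReal_biUnion [IsFiniteMeasure μ] {ι : Type*} (t : Finset ι)
    {s : ι → Set X} (hs : ∀ i ∈ t, NullMeasurableSet (s i) μ)
    (h's : Set.Pairwise (↑t) (AEDisjoint μ on s)) (h0 : μ (⋃ i ∈ t, s i) ≠ 0) :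
    ∑ i ∈ t, μ.real (s i) / μ.real (⋃ i ∈ t, s i) = 1 := by
  rw [← Finset.sum_div, ← measureReal_biUnion_finset₀ h's hs,
    div_self ((measureReal_ne_zero_iff (measure_ne_top μ _)).2 h0)]

theorem sq_setAverage_le_setAverage_sq {f : X → ℝ} {J : Set X} (h0 : μ J ≠ 0) (hJ : μ J ≠ ∞)
    (hf : IntegrableOn f J μ) (hf2 : IntegrableOn (fun x => f x ^ 2) J μ) :
    (⨍ x in J, f x ∂μ) ^ 2 ≤ ⨍ x in J, f x ^ 2 ∂μ :=
  (even_two.convexOn_pow (𝕜 := ℝ)).map_set_average_le (continuous_pow 2).continuousOn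
    isClosed_univ h0 hJ (by simp) hf hf2

theorem setAverage_comp_eq_of_ae_eq_const [CompleteSpace E] {f : X → ℝ} {c : ℝ} {J : Set X}
    (h0 : μ J ≠ 0) (hJ : μ J ≠ ∞) (hc : ∀ᵐ x ∂μ.restrict J, f x = c) (g : ℝ → E) :
    ⨍ x in J, g (f x) ∂μ = g c := by
  rw [average_congr (hc.mono fun x hx => by rw [hx]), setAverage_const h0 hJ]

end MeasureTheory

noncomputable def bellmanPoint {X : Type*} [MeasurableSpace X] (μ : Measure X) (φ : X → ℝ)
    (J : Set X) : ℝ × ℝ :=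
  (⨍ x in J, φ x ∂μ, ⨍ x in J, φ x ^ 2 ∂μ)

theorem bellmanPoint_mem_omegaSet {X : Type*} [MeasurableSpace X] {μ : Measure X} {φ : X → ℝ}
    {J : Set X} {ε : ℝ} (h0 : μ J ≠ 0) (hJ : μ J ≠ ⊤) (hφ : IntegrableOn φ J μ)
    (hφ2 : IntegrableOn (fun x => φ x ^ 2) J μ)
    (hvar : (⨍ x in J, φ x ^ 2 ∂μ) - (⨍ x in J, φ x ∂μ) ^ 2 ≤ ε ^ 2) :
    bellmanPoint μ φ J ∈ OmegaSet ε :=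
  mem_omegaSet_iff.2 ⟨sub_nonneg.2 (sq_setAverage_le_setAverage_sq h0 hJ hφ hφ2), hvar⟩

namespace AlphaTree

variable {X : Type*} [MeasurableSpace X] {μ : Measure X} {α : ℝ} (T : AlphaTree μ α)

theorem mem_tree {m : ℕ} {J : Set X} (hJ : J ∈ T.gens m) : J ∈ T.tree :=
  Set.mem_iUnion.2 ⟨m, hJ⟩

theorem mem_gens_succ {m : ℕ} {J I : Set X} (hJ : J ∈ T.gens m) (hI : I ∈ T.children J) :
    I ∈ T.gens (m + 1) := by
  rw [T.gens_succ]
  exact Set.mem_biUnion hJ hI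

theorem induction_on_gens {P : Set X → Prop} (N : ℕ) (hleaf : ∀ J ∈ T.gens N, P J)
    (hstep : ∀ m, ∀ J ∈ T.gens m, (∀ I ∈ T.children J, P I) → P J) : P Set.univ := by
  have key : ∀ d m, m + d = N → ∀ J ∈ T.gens m, P J := by
    intro d
    induction d with
    | zero => rintro m rfl; exact hleaf
    | succ d ih =>
      rintro m rfl J hJ
      exact hstep m J hJ fun I hI => ih (m + 1) (by ring) I (T.mem_gens_succ hJ hI)
  exact key N 0 (zero_add N) _ (by rw [T.gens_zero]; rfl)

theorem measure_ne_zero [IsFiniteMeasure μ] (hα : 0 < α) (hX : μ Set.univ ≠ 0) :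
    ∀ m, ∀ J ∈ T.gens m, μ J ≠ 0 := by
  intro m
  induction m with
  | zero =>
    rintro J hJ
    rw [T.gens_zero] at hJ
    rwa [Set.mem_singleton_iff.1 hJ]
  | succ m ih =>
    intro I hI
    rw [T.gens_succ] at hI
    obtain ⟨J, hJ, hIJ⟩ := Set.mem_iUnion₂.1 hI
    have hJpos : 0 < μ.real J := ENNReal.toReal_pos (ih J hJ) (measure_ne_top μ J)
    refine (measureReal_ne_zero_iff (measure_ne_top μ I)).1 ?_
    exact (mul_pos hα hJpos).trans_le (T.children_not_small m J hJ I hIJ) |>.ne'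

theorem integrable_of_ae_const {E : Type*} [NormedAddCommGroup E] [IsFiniteMeasure μ]
    {f : X → E} {N : ℕ} (hf : ∀ J ∈ T.gens N, ∃ c, ∀ᵐ x ∂μ.restrict J, f x = c) :
    Integrable f μ := by
  rw [← integrableOn_univ]
  refine T.induction_on_gens (P := fun J => IntegrableOn f J μ) N (fun J hJ => ?_)
    fun m J hJ hI => ?_
  · obtain ⟨c, hc⟩ := hf J hJ
    exact (integrableOn_const (measure_ne_top μ J)).congr_fun_ae (hc.mono fun x hx => hx.symm)
  · rw [← T.children_cover m J hJ, Set.sUnion_eq_biUnion]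
    exact (integrableOn_finite_biUnion (T.children_finite m J hJ)).2 hI

section Children

variable {m : ℕ} {J : Set X}

theorem nullMeasurableSet_of_mem_children (hJ : J ∈ T.gens m) :
    ∀ I ∈ (T.children_finite m J hJ).toFinset, NullMeasurableSet (id I) μ := fun I hI =>
  (T.measurableSet_mem (m + 1) I
    (T.mem_gens_succ hJ ((Set.Finite.mem_toFinset _).1 hI))).nullMeasurableSet

theorem pairwise_aedisjoint_children (hJ : J ∈ T.gens m) :
    Set.Pairwise ↑(T.children_finite m J hJ).toFinset (AEDisjoint μ on id) := by
  rw [Set.Finite.coe_toFinset]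
  exact T.children_ae_disjoint m J hJ

theorem biUnion_children (hJ : J ∈ T.gens m) :
    ⋃ I ∈ (T.children_finite m J hJ).toFinset, id I = J := by
  simpa [Set.sUnion_eq_biUnion] using T.children_cover m J hJ

theorem sum_children_measureReal_div [IsFiniteMeasure μ] (hJ : J ∈ T.gens m) (h0 : μ J ≠ 0) :
    ∑ I ∈ (T.children_finite m J hJ).toFinset, μ.real I / μ.real J = 1 := by
  have h := sum_measureReal_div_measureReal_biUnion _ (T.nullMeasurableSet_of_mem_children hJ)
    (T.pairwise_aedisjoint_children hJ) (by rwa [T.biUnion_children hJ])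
  rwa [T.biUnion_children hJ] at h

theorem setAverage_eq_sum_children [IsFiniteMeasure μ] {E : Type*} [NormedAddCommGroup E]
    [NormedSpace ℝ E] (hJ : J ∈ T.gens m) {f : X → E} (hf : IntegrableOn f J μ) :
    ⨍ x in J, f x ∂μ =
      ∑ I ∈ (T.children_finite m J hJ).toFinset, (μ.real I / μ.real J) • ⨍ x in I, f x ∂μ := by
  have h := setAverage_biUnion_finset₀ (f := f) _ (T.nullMeasurableSet_of_mem_children hJ)
    (T.pairwise_aedisjoint_children hJ) fun I hI => hf.mono_set ?_
  · rwa [T.biUnion_children hJ] at h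
  · rw [← T.children_cover m J hJ]
    exact Set.subset_sUnion_of_mem ((Set.Finite.mem_toFinset _).1 hI)

theorem bellmanPoint_eq_sum_children [IsFiniteMeasure μ] (hJ : J ∈ T.gens m) {φ : X → ℝ}
    (hφ : IntegrableOn φ J μ) (hφ2 : IntegrableOn (fun x => φ x ^ 2) J μ) :
    bellmanPoint μ φ J =
      ∑ I ∈ (T.children_finite m J hJ).toFinset, (μ.real I / μ.real J) • bellmanPoint μ φ I := by
  ext
  · simpa [bellmanPoint, Prod.fst_sum] using T.setAverage_eq_sum_children hJ hφ
  · simpa [bellmanPoint, Prod.snd_sum] using T.setAverage_eq_sum_children hJ hφ2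

end Children

theorem average_le_of_isAlphaConcaveOn [IsFiniteMeasure μ] (hα : 0 < α) (hX : μ Set.univ ≠ 0)
    {ε : ℝ} {B : ℝ × ℝ → ℝ} (hB : IsAlphaConcaveOn α (OmegaSet ε) B) {φ : X → ℝ} {N : ℕ}
    (hN : ∀ J ∈ T.gens N, ∃ c, ∀ᵐ x ∂μ.restrict J, φ x = c)
    (hbmo : ∀ J ∈ T.tree, (⨍ x in J, φ x ^ 2 ∂μ) - (⨍ x in J, φ x ∂μ) ^ 2 ≤ ε ^ 2) :
    ⨍ x, B (φ x, φ x ^ 2) ∂μ ≤ B (⨍ x, φ x ∂μ, ⨍ x, φ x ^ 2 ∂μ) := by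
  have hint : ∀ g : ℝ → ℝ, Integrable (fun x => g (φ x)) μ := fun g =>
    T.integrable_of_ae_const fun J hJ =>
      let ⟨c, hc⟩ := hN J hJ
      ⟨g c, hc.mono fun x hx => by rw [hx]⟩
  have h0 := T.measure_ne_zero hα hX
  have hφ : Integrable φ μ := hint id
  have hφ2 : Integrable (fun x => φ x ^ 2) μ := hint (· ^ 2)
  have hmem : ∀ m, ∀ J ∈ T.gens m, bellmanPoint μ φ J ∈ OmegaSet ε := fun m J hJ =>
    bellmanPoint_mem_omegaSet (h0 m J hJ) (measure_ne_top μ J) hφ.integrableOn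
      hφ2.integrableOn (hbmo J (T.mem_tree hJ))
  suffices key : ⨍ x in Set.univ, B (φ x, φ x ^ 2) ∂μ ≤ B (bellmanPoint μ φ Set.univ) by
    simpa [bellmanPoint] using key
  refine T.induction_on_gens
    (P := fun J => ⨍ x in J, B (φ x, φ x ^ 2) ∂μ ≤ B (bellmanPoint μ φ J)) N
    (fun J hJ => ?_) fun m J hJ ih => ?_
  · obtain ⟨c, hc⟩ := hN J hJ
    have hconst (g : ℝ → ℝ) : ⨍ x in J, g (φ x) ∂μ = g c :=
      setAverage_comp_eq_of_ae_eq_const (h0 N J hJ) (measure_ne_top μ J) hc g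
    rw [show bellmanPoint μ φ J = (c, c ^ 2) from Prod.ext (hconst id) (hconst (· ^ 2))]
    exact (hconst fun r => B (r, r ^ 2)).le
  · set C := (T.children_finite m J hJ).toFinset
    have hC : ∀ I ∈ C, I ∈ T.children J := fun I hI => (Set.Finite.mem_toFinset _).1 hI
    have hw : ∀ I ∈ C, α ≤ μ.real I / μ.real J := fun I hI =>
      (le_div_iff₀ (ENNReal.toReal_pos (h0 m J hJ) (measure_ne_top μ J))).2
        (T.children_not_small m J hJ I (hC I hI))
    have hsplit := T.bellmanPoint_eq_sum_children hJ hφ.integrableOn hφ2.integrableOn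
    calc ⨍ x in J, B (φ x, φ x ^ 2) ∂μ
        = ∑ I ∈ C, (μ.real I / μ.real J) • ⨍ x in I, B (φ x, φ x ^ 2) ∂μ :=
          T.setAverage_eq_sum_children hJ (hint fun r => B (r, r ^ 2)).integrableOn
      _ ≤ ∑ I ∈ C, (μ.real I / μ.real J) * B (bellmanPoint μ φ I) :=
          Finset.sum_le_sum fun I hI =>
            mul_le_mul_of_nonneg_left (ih I (hC I hI)) (hα.le.trans (hw I hI))
      _ ≤ B (∑ I ∈ C, (μ.real I / μ.real J) • bellmanPoint μ φ I) :=
          hB.le_map_sum hα C hw (T.sum_children_measureReal_div hJ (h0 m J hJ))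
            (fun I hI => hmem (m + 1) I (T.mem_gens_succ hJ (hC I hI))) (hsplit ▸ hmem m J hJ)
      _ = B (bellmanPoint μ φ J) := by rw [← hsplit]

end AlphaTree

theorem stmt10_general {X : Type*} [MeasurableSpace X] (μ : Measure X) (α ε : ℝ)
    (hα : α ∈ Set.Ioc (0 : ℝ) (1 / 2))
    (hXpos : 0 < μ Set.univ) (hXfin : μ Set.univ < ⊤)
    (T : AlphaTree μ α)
    (B : ℝ × ℝ → ℝ)
    (hB : ∀ β ∈ Set.Icc α (1 / 2 : ℝ), ∀ x y : ℝ × ℝ,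
      x ∈ OmegaSet ε → y ∈ OmegaSet ε → β • x + (1 - β) • y ∈ OmegaSet ε →
      β * B x + (1 - β) * B y ≤ B (β • x + (1 - β) • y))
    (φ : X → ℝ)
    (hsimple : ∃ N : ℕ, ∀ J ∈ T.gens N, ∃ c : ℝ, ∀ᵐ x ∂μ.restrict J, φ x = c)
    (hbmo : ∀ J ∈ T.tree,
      (⨍ x in J, (φ x) ^ 2 ∂μ) - (⨍ x in J, φ x ∂μ) ^ 2 ≤ ε ^ 2) :
    (1 / (μ Set.univ).toReal) * ∫ x, B (φ x, (φ x) ^ 2) ∂μ ≤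
      B (⨍ x, φ x ∂μ, ⨍ x, (φ x) ^ 2 ∂μ) := by
  have : IsFiniteMeasure μ := ⟨hXfin⟩
  obtain ⟨N, hN⟩ := hsimple
  have h := T.average_le_of_isAlphaConcaveOn hα.1 hXpos.ne' hB hN hbmo
  rwa [average_eq, smul_eq_mul, measureReal_def, ← one_div] at h

theorem stmt10 {X : Type*} [MeasurableSpace X] (μ : Measure X) (α ε : ℝ)
    (hα : α ∈ Set.Ioc (0 : ℝ) (1 / 2)) (hε : 0 < ε)
    (hXpos : 0 < μ Set.univ) (hXfin : μ Set.univ < ⊤)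
    (T : AlphaTree μ α)
    (B : ℝ × ℝ → ℝ)
    (hB : ∀ β ∈ Set.Icc α (1 / 2 : ℝ), ∀ x y : ℝ × ℝ,
      x ∈ OmegaSet ε → y ∈ OmegaSet ε → β • x + (1 - β) • y ∈ OmegaSet ε →
      β * B x + (1 - β) * B y ≤ B (β • x + (1 - β) • y))
    (φ : X → ℝ)
    (hsimple : ∃ N : ℕ, ∀ J ∈ T.gens N, ∃ c : ℝ, ∀ᵐ x ∂μ.restrict J, φ x = c)
    (hbmo : ∀ J ∈ T.tree,
      (⨍ x in J, (φ x) ^ 2 ∂μ) - (⨍ x in J, φ x ∂μ) ^ 2 ≤ ε ^ 2) :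
    (1 / (μ Set.univ).toReal) * ∫ x, B (φ x, (φ x) ^ 2) ∂μ ≤
      B (⨍ x, φ x ∂μ, ⨍ x, (φ x) ^ 2 ∂μ) :=
  stmt10_general μ α ε hα hXpos hXfin T B hB φ hsimple hbmo
end

section
/- Let ε > 0, α ∈ (0,1/2], and set b(x) = (√α/((1+α)ε))·x₂ on Ω₀ and b(x) = |x₁| on Ω₁, where Ω₀ = {x ∈ Ω_ε : ((1+α)ε/√α)|x₁| ≤ x₂} and Ω₁ = Ω_ε \ int(Ω₀). Then b is α-convex on Ω_ε: for any β ∈ [α,1/2] and any P, Q, S ∈ Ω_ε with P = (1−β)S + βQ, one has b(P) ≤ (1−β)b(S) + βb(Q). -/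
theorem stmt11 (α ε : ℝ) (hα : α ∈ Set.Ioc (0 : ℝ) (1 / 2)) (hε : 0 < ε)
    (b : ℝ × ℝ → ℝ)
    (hb : b = fun x : ℝ × ℝ =>
      if (1 + α) * ε / Real.sqrt α * |x.1| ≤ x.2
      then Real.sqrt α / ((1 + α) * ε) * x.2
      else |x.1|) :
    ∀ β ∈ Set.Icc α (1 / 2 : ℝ), ∀ P Q S : ℝ × ℝ,
      P ∈ OmegaSet ε → Q ∈ OmegaSet ε → S ∈ OmegaSet ε →
      P = (1 - β) • S + β • Q →
      b P ≤ (1 - β) * b S + β * b Q := by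
  obtain ⟨hα0, hα2⟩ := hα
  have hsa : 0 < Real.sqrt α := Real.sqrt_pos.2 hα0
  have hden : 0 < (1 + α) * ε := by positivity
  set c : ℝ := Real.sqrt α / ((1 + α) * ε) with hc
  have hc0 : 0 ≤ c := by positivity
  have hbmax : ∀ x : ℝ × ℝ, b x = max |x.1| (c * x.2) := by
    intro x
    have hiff : ((1 + α) * ε / Real.sqrt α * |x.1| ≤ x.2) ↔ |x.1| ≤ c * x.2 := by
      rw [hc, div_mul_eq_mul_div, div_le_iff₀ hsa, div_mul_eq_mul_div, le_div_iff₀ hden]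
      constructor <;> intro h <;> nlinarith
    rw [hb]
    simp only [hiff]
    by_cases h : |x.1| ≤ c * x.2
    · rw [if_pos h, max_eq_right h]
    · rw [if_neg h, max_eq_left (le_of_not_ge h)]
  intro β hβ P Q S _ _ _ hPQS
  have hβ0 : 0 ≤ β := le_trans hα0.le hβ.1
  have hβ1 : 0 ≤ 1 - β := by
    have := hβ.2; linarith
  have hP1 : P.1 = (1 - β) * S.1 + β * Q.1 := by
    rw [hPQS]; simp [smul_eq_mul]
  have hP2 : P.2 = (1 - β) * S.2 + β * Q.2 := by
    rw [hPQS]; simp [smul_eq_mul]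
  rw [hbmax P, hbmax Q, hbmax S]
  have hS1 : |S.1| ≤ max |S.1| (c * S.2) := le_max_left _ _
  have hS2 : c * S.2 ≤ max |S.1| (c * S.2) := le_max_right _ _
  have hQ1 : |Q.1| ≤ max |Q.1| (c * Q.2) := le_max_left _ _
  have hQ2 : c * Q.2 ≤ max |Q.1| (c * Q.2) := le_max_right _ _
  apply max_le
  · calc |P.1| = |(1 - β) * S.1 + β * Q.1| := by rw [hP1]
      _ ≤ |(1 - β) * S.1| + |β * Q.1| := abs_add_le _ _
      _ = (1 - β) * |S.1| + β * |Q.1| := by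
          rw [abs_mul, abs_mul, abs_of_nonneg hβ1, abs_of_nonneg hβ0]
      _ ≤ (1 - β) * max |S.1| (c * S.2) + β * max |Q.1| (c * Q.2) := by
          gcongr
  · calc c * P.2 = (1 - β) * (c * S.2) + β * (c * Q.2) := by rw [hP2]; ring
      _ ≤ (1 - β) * max |S.1| (c * S.2) + β * max |Q.1| (c * Q.2) := by
          gcongr
end

section
/- Fix δ ∈ (0,1) and ε ∈ (0,δ). The function B(x) = (e^{-δ}/(1−δ))·e^{x₁ + r(x)}·(1 − r(x)), with r(x) = √(δ² − x₂ + x₁²), satisfies B(x₁, x₁²) = e^{x₁} on the lower parabola, and is a solution of the homogeneous Monge–Ampère equation B_{x₁x₁}B_{x₂x₂} = B_{x₁x₂}² in the interior of Ω_ε. -/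
/-- Partial derivative in the first variable. -/
noncomputable def D1 (f : ℝ × ℝ → ℝ) : ℝ × ℝ → ℝ :=
  fun x => deriv (fun s => f (s, x.2)) x.1

/-- Partial derivative in the second variable. -/
noncomputable def D2 (f : ℝ × ℝ → ℝ) : ℝ × ℝ → ℝ :=
  fun x => deriv (fun s => f (x.1, s)) x.2

/-!
Write `r = √(K - x₂ + x₁²)` and `t = x₁ + r`. Then `∂₁B = C e^t (1 - t)` and `∂₂B = C e^t / 2`
are both functions of `t` alone, so the Hessian of `B` has rank at most one; concretely
`∂₁t = t / r` and `∂₂t = -1 / (2r)`, i.e. `∂₁t = -2 t ∂₂t`, which is exactly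
`B₁₁ B₂₂ = B₁₂²`. With `K = δ²`, on the parabola `x₂ = x₁²` one has `r = δ`, which gives
the boundary value.
-/

open Real Filter Topology

namespace Filter.EventuallyEq

variable {f g : ℝ × ℝ → ℝ} {x : ℝ × ℝ}

theorem D1_eq (h : f =ᶠ[𝓝 x] g) : D1 f x = D1 g x :=
  (h.comp_tendsto ((continuous_id.prodMk continuous_const).tendsto' x.1 x rfl)).deriv_eq

theorem D2_eq (h : f =ᶠ[𝓝 x] g) : D2 f x = D2 g x :=
  (h.comp_tendsto ((continuous_const.prodMk continuous_id).tendsto' x.2 x rfl)).deriv_eq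

end Filter.EventuallyEq

noncomputable def radius (K : ℝ) (x : ℝ × ℝ) : ℝ := √(K - x.2 + x.1 ^ 2)

noncomputable def bellman (C K : ℝ) (x : ℝ × ℝ) : ℝ :=
  C * exp (x.1 + radius K x) * (1 - radius K x)

theorem bellman_parabola (C : ℝ) {δ : ℝ} (hδ : 0 ≤ δ) (a : ℝ) :
    bellman C (δ ^ 2) (a, a ^ 2) = C * exp (a + δ) * (1 - δ) := by
  simp only [bellman, radius, sub_add_cancel, sqrt_sq hδ]

section Derivatives

variable {C K : ℝ} {x : ℝ × ℝ}

theorem isOpen_radicand_pos (K : ℝ) : IsOpen {y : ℝ × ℝ | 0 < K - y.2 + y.1 ^ 2} :=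
  isOpen_lt continuous_const (by fun_prop)

theorem radius_pos (hx : 0 < K - x.2 + x.1 ^ 2) : 0 < radius K x := sqrt_pos.mpr hx

theorem hasDerivAt_radius_fst (hx : 0 < K - x.2 + x.1 ^ 2) :
    HasDerivAt (fun s => radius K (s, x.2)) (x.1 / radius K x) x.1 := by
  refine (((hasDerivAt_pow 2 x.1).const_add (K - x.2)).sqrt hx.ne').congr_deriv ?_
  rw [radius]
  field_simp
  norm_num

theorem hasDerivAt_radius_snd (hx : 0 < K - x.2 + x.1 ^ 2) :
    HasDerivAt (fun t => radius K (x.1, t)) (-(2 * radius K x)⁻¹) x.2 := by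
  refine ((((hasDerivAt_id x.2).const_sub K).add_const (x.1 ^ 2)).sqrt hx.ne').congr_deriv ?_
  rw [neg_div, one_div]
  rfl

theorem hasDerivAt_exp_add_radius_fst (hx : 0 < K - x.2 + x.1 ^ 2) :
    HasDerivAt (fun s => exp (s + radius K (s, x.2)))
      (exp (x.1 + radius K x) * ((x.1 + radius K x) / radius K x)) x.1 := by
  refine ((hasDerivAt_id x.1).add (hasDerivAt_radius_fst hx)).exp.congr_deriv ?_
  field_simp [(radius_pos hx).ne']
  simp only [Pi.add_apply, id]
  ring

theorem hasDerivAt_exp_add_radius_snd (hx : 0 < K - x.2 + x.1 ^ 2) :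
    HasDerivAt (fun t => exp (x.1 + radius K (x.1, t)))
      (exp (x.1 + radius K x) * -(2 * radius K x)⁻¹) x.2 :=
  ((hasDerivAt_radius_snd hx).const_add x.1).exp

theorem hasDerivAt_bellman_fst (hx : 0 < K - x.2 + x.1 ^ 2) :
    HasDerivAt (fun s => bellman C K (s, x.2))
      (C * exp (x.1 + radius K x) * (1 - radius K x - x.1)) x.1 := by
  refine (((hasDerivAt_exp_add_radius_fst hx).const_mul C).mul
    ((hasDerivAt_radius_fst hx).const_sub 1)).congr_deriv ?_
  field_simp [(radius_pos hx).ne']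
  ring

theorem hasDerivAt_bellman_snd (hx : 0 < K - x.2 + x.1 ^ 2) :
    HasDerivAt (fun t => bellman C K (x.1, t)) (C * exp (x.1 + radius K x) / 2) x.2 := by
  refine (((hasDerivAt_exp_add_radius_snd hx).const_mul C).mul
    ((hasDerivAt_radius_snd hx).const_sub 1)).congr_deriv ?_
  field_simp [(radius_pos hx).ne']
  ring

theorem D1_bellman_eventuallyEq (hx : 0 < K - x.2 + x.1 ^ 2) :
    D1 (bellman C K) =ᶠ[𝓝 x] fun y => C * exp (y.1 + radius K y) * (1 - radius K y - y.1) :=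
  ((isOpen_radicand_pos K).eventually_mem hx).mono fun _ hy => (hasDerivAt_bellman_fst hy).deriv

theorem D2_bellman_eventuallyEq (hx : 0 < K - x.2 + x.1 ^ 2) :
    D2 (bellman C K) =ᶠ[𝓝 x] fun y => C * exp (y.1 + radius K y) / 2 :=
  ((isOpen_radicand_pos K).eventually_mem hx).mono fun _ hy => (hasDerivAt_bellman_snd hy).deriv

theorem D1_D1_bellman (hx : 0 < K - x.2 + x.1 ^ 2) :
    D1 (D1 (bellman C K)) x =
      -(C * exp (x.1 + radius K x) * (x.1 + radius K x) ^ 2 / radius K x) := by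
  rw [(D1_bellman_eventuallyEq hx).D1_eq]
  refine ((((hasDerivAt_exp_add_radius_fst hx).const_mul C).mul
    (((hasDerivAt_radius_fst hx).const_sub 1).sub (hasDerivAt_id x.1))).congr_deriv ?_).deriv
  simp only [Pi.sub_apply, id]
  field_simp [(radius_pos hx).ne']
  ring

theorem D2_D2_bellman (hx : 0 < K - x.2 + x.1 ^ 2) :
    D2 (D2 (bellman C K)) x = -(C * exp (x.1 + radius K x) / (4 * radius K x)) := by
  rw [(D2_bellman_eventuallyEq hx).D2_eq]
  refine ((((hasDerivAt_exp_add_radius_snd hx).const_mul C).div_const 2).congr_deriv ?_).deriv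
  field_simp [(radius_pos hx).ne']
  ring

theorem D1_D2_bellman (hx : 0 < K - x.2 + x.1 ^ 2) :
    D1 (D2 (bellman C K)) x =
      C * exp (x.1 + radius K x) * ((x.1 + radius K x) / radius K x) / 2 := by
  rw [(D2_bellman_eventuallyEq hx).D1_eq]
  refine ((((hasDerivAt_exp_add_radius_fst hx).const_mul C).div_const 2).congr_deriv ?_).deriv
  ring

theorem bellman_mongeAmpere (hx : 0 < K - x.2 + x.1 ^ 2) :
    D1 (D1 (bellman C K)) x * D2 (D2 (bellman C K)) x = D1 (D2 (bellman C K)) x ^ 2 := by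
  rw [D1_D1_bellman hx, D2_D2_bellman hx, D1_D2_bellman hx]
  field_simp [(radius_pos hx).ne']
  ring

end Derivatives

theorem stmt17 (δ ε : ℝ) (hδ : δ ∈ Set.Ioo (0 : ℝ) 1) (hε : ε ∈ Set.Ioo 0 δ)
    (B : ℝ × ℝ → ℝ)
    (hB : B = fun x : ℝ × ℝ =>
      Real.exp (-δ) / (1 - δ) *
        Real.exp (x.1 + Real.sqrt (δ ^ 2 - x.2 + x.1 ^ 2)) *
        (1 - Real.sqrt (δ ^ 2 - x.2 + x.1 ^ 2))) :
    (∀ x₁ : ℝ, B (x₁, x₁ ^ 2) = Real.exp x₁) ∧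
    (∀ x : ℝ × ℝ, x.1 ^ 2 < x.2 → x.2 < x.1 ^ 2 + ε ^ 2 →
      D1 (D1 B) x * D2 (D2 B) x = (D1 (D2 B) x) ^ 2) := by
  obtain ⟨hδ0, hδ1⟩ := hδ
  obtain ⟨hε0, hεδ⟩ := hε
  have hB' : B = bellman (exp (-δ) / (1 - δ)) (δ ^ 2) := hB
  subst hB'
  refine ⟨fun a => ?_, fun x hx₁ hx₂ => bellman_mongeAmpere (by nlinarith)⟩
  rw [bellman_parabola _ hδ0.le, mul_right_comm, div_mul_cancel₀ _ (sub_ne_zero.mpr hδ1.ne'),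
    ← exp_add]
  ring_nf
end
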